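/- For any finite collection of future-pointing unit timelike vectors u₁,…,u_N and complex numbers α₁,…,α_N with Σᵢ αᵢ = 0, one has Σᵢⱼ \overline{αᵢ} αⱼ λᵢⱼ coth λᵢⱼ ≤ 0, where λᵢⱼ is the hyperbolic angle between uᵢ and uⱼ (cosh λᵢⱼ = uᵢ·uⱼ), and λ coth λ is interpreted as 1 when λ = 0. -/

import Mathlib

open scoped ComplexOrder

/-- Minkowski bilinear form on `ℝ⁴` with signature `(+,-,-,-)`. -/
def mink (u v : Fin 4 → ℝ) : ℝ :=
  u 0 * v 0 - u 1 * v 1 - u 2 * v 2 - u 3 * v 3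

/-- Inverse hyperbolic cosine: `arcosh x = log (x + √(x² - 1))`. -/
noncomputable def arcosh (x : ℝ) : ℝ := Real.log (x + Real.sqrt (x ^ 2 - 1))

/-- `λ coth λ`, interpreted as `1` at `λ = 0`. -/
noncomputable def lcoth (l : ℝ) : ℝ :=
  if l = 0 then 1 else l * (Real.cosh l / Real.sinh l)

/-!
Parametrize the future null directions stereographically by `n(z)`, `z ∈ ℝ²`. For unit future
timelike `u, v` with `c = ⟪u, v⟫ = cosh λ`, Feynman's formula `1 / (P Q) = ∫₀¹ ((1 - t) P + t Q)⁻²`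
and the integral `∫ ⟪w, n(z)⟫⁻² dz = π / ⟪w, w⟫` for future timelike `w` (complete the square
and pass to polar coordinates) give `∫ c / (⟪u, n(z)⟫ ⟪v, n(z)⟫) dz = π c ∫₀¹ ⟪w_t, w_t⟫⁻¹ dt = π λ coth λ`,
where `w_t = (1 - t) u + t v`. Hence for real `w` with `∑ wᵢ = 0`,
`π ∑ wᵢ wⱼ λᵢⱼ coth λᵢⱼ = ∫ ⟪p(z), p(z)⟫ dz` with `p(z) = ∑ (wᵢ / ⟪uᵢ, n(z)⟫) uᵢ`; since
`⟪p(z), n(z)⟫ = ∑ wᵢ = 0` and `n(z)` is null, `p(z)` is not timelike and the integrand is `≤ 0`.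
The kernel is real and symmetric, so complex `α` reduce to their real and imaginary parts.
-/

open MeasureTheory Filter Set
open scoped Real

lemma mink_comm (u v : Fin 4 → ℝ) : mink u v = mink v u := by
  simp only [mink]; ring

lemma mink_add_left (u v w : Fin 4 → ℝ) : mink (u + v) w = mink u w + mink v w := by
  simp only [mink, Pi.add_apply]; ring

lemma mink_smul_left (a : ℝ) (u v : Fin 4 → ℝ) : mink (a • u) v = a * mink u v := by
  simp only [mink, Pi.smul_apply, smul_eq_mul]; ring

lemma mink_smul_right (a : ℝ) (u v : Fin 4 → ℝ) : mink u (a • v) = a * mink u v := by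
  rw [mink_comm, mink_smul_left, mink_comm]

lemma mink_sum_left {ι : Type*} (s : Finset ι) (u : ι → Fin 4 → ℝ) (v : Fin 4 → ℝ) :
    mink (∑ i ∈ s, u i) v = ∑ i ∈ s, mink (u i) v := by
  simp only [mink, Finset.sum_apply, Finset.sum_mul, Finset.sum_sub_distrib]

lemma mink_sum_right {ι : Type*} (s : Finset ι) (u : Fin 4 → ℝ) (v : ι → Fin 4 → ℝ) :
    mink u (∑ i ∈ s, v i) = ∑ i ∈ s, mink u (v i) := by
  simp only [mink_comm u, mink_sum_left]

lemma spatial_inner_sq_le (u v : Fin 4 → ℝ) :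
    (u 1 * v 1 + u 2 * v 2 + u 3 * v 3) ^ 2
      ≤ (u 1 ^ 2 + u 2 ^ 2 + u 3 ^ 2) * (v 1 ^ 2 + v 2 ^ 2 + v 3 ^ 2) := by
  nlinarith [sq_nonneg (u 1 * v 2 - u 2 * v 1), sq_nonneg (u 1 * v 3 - u 3 * v 1),
    sq_nonneg (u 2 * v 3 - u 3 * v 2)]

lemma mink_pos_of_mink_self_pos {u v : Fin 4 → ℝ} (hu : 0 < mink u u) (hv : 0 < mink v v)
    (hu0 : 0 < u 0) (hv0 : 0 < v 0) : 0 < mink u v := by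
  simp only [mink] at *
  have cauchy_schwarz := spatial_inner_sq_le u v
  nlinarith [mul_pos hu0 hv0, mul_pos hu hv]

lemma one_le_mink {u v : Fin 4 → ℝ} (hu : mink u u = 1) (hv : mink v v = 1)
    (hu0 : 0 < u 0) (hv0 : 0 < v 0) : 1 ≤ mink u v := by
  simp only [mink] at *
  have cauchy_schwarz := spatial_inner_sq_le u v
  have h₁ : (u 1 ^ 2 + u 2 ^ 2 + u 3 ^ 2) * (v 1 ^ 2 + v 2 ^ 2 + v 3 ^ 2)
      ≤ (u 0 * v 0 - 1) ^ 2 := by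
    nlinarith [sq_nonneg (u 0 - v 0)]
  have h₂ : 1 ≤ u 0 * v 0 := by
    nlinarith [mul_pos hu0 hv0, sq_nonneg (u 1), sq_nonneg (u 2), sq_nonneg (u 3),
      sq_nonneg (v 1), sq_nonneg (v 2), sq_nonneg (v 3)]
  linarith [(abs_le_of_sq_le_sq' (cauchy_schwarz.trans h₁) (by linarith)).2]

lemma mink_self_nonpos_of_mink_eq_zero {n p : Fin 4 → ℝ} (hn : mink n n = 0) (hn0 : n 0 ≠ 0)
    (hp : mink p n = 0) : mink p p ≤ 0 := by
  simp only [mink] at *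
  have cauchy_schwarz := spatial_inner_sq_le p n
  have h : p 0 ^ 2 * n 0 ^ 2 ≤ (p 1 ^ 2 + p 2 ^ 2 + p 3 ^ 2) * n 0 ^ 2 := by
    rw [← mul_pow, show p 0 * n 0 = p 1 * n 1 + p 2 * n 2 + p 3 * n 3 by linarith,
      show n 0 ^ 2 = n 1 ^ 2 + n 2 ^ 2 + n 3 ^ 2 by linarith]
    exact cauchy_schwarz
  nlinarith [le_of_mul_le_mul_right h (by positivity)]

/-- Stereographic parametrization of the future null directions by the plane. -/
noncomputable def nullVec (z : ℝ × ℝ) : Fin 4 → ℝ :=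
  ![1 + z.1 ^ 2 + z.2 ^ 2, 2 * z.1, 2 * z.2, 1 - z.1 ^ 2 - z.2 ^ 2]

lemma mink_nullVec_self (z : ℝ × ℝ) : mink (nullVec z) (nullVec z) = 0 := by
  simp [mink, nullVec]; ring

lemma nullVec_zero_pos (z : ℝ × ℝ) : 0 < nullVec z 0 := by
  simp [nullVec]; positivity

@[fun_prop]
lemma continuous_nullVec : Continuous nullVec := by
  refine continuous_pi fun i ↦ ?_
  fin_cases i <;> simp [nullVec] <;> fun_prop

@[fun_prop]
lemma continuous_mink (u : Fin 4 → ℝ) : Continuous (mink u) := by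
  unfold mink; fun_prop

lemma add_pos_of_mink_self_pos {u : Fin 4 → ℝ} (hu : 0 < mink u u) (hu0 : 0 < u 0) :
    0 < u 0 + u 3 := by
  simp only [mink] at hu
  nlinarith [sq_nonneg (u 1), sq_nonneg (u 2)]

lemma mul_mink_nullVec (u : Fin 4 → ℝ) (z : ℝ × ℝ) :
    (u 0 + u 3) * mink u (nullVec z)
      = ((u 0 + u 3) * z.1 - u 1) ^ 2 + ((u 0 + u 3) * z.2 - u 2) ^ 2 + mink u u := by
  simp [mink, nullVec]; ring

lemma mink_nullVec_pos {u : Fin 4 → ℝ} (hu : 0 < mink u u) (hu0 : 0 < u 0) (z : ℝ × ℝ) :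
    0 < mink u (nullVec z) := by
  refine pos_of_mul_pos_right ?_ (add_pos_of_mink_self_pos hu hu0).le
  rw [mul_mink_nullVec]
  positivity

lemma sum_mul_mink_div_nonpos {ι : Type*} [Fintype ι] (u : ι → Fin 4 → ℝ) (w : ι → ℝ)
    {n : Fin 4 → ℝ} (hn : mink n n = 0) (hn0 : n 0 ≠ 0) (hun : ∀ i, mink (u i) n ≠ 0)
    (hw : ∑ i, w i = 0) :
    ∑ i, ∑ j, w i * w j * (mink (u i) (u j) / (mink (u i) n * mink (u j) n)) ≤ 0 := by
  set p := ∑ i, (w i / mink (u i) n) • u i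
  have hpn : mink p n = 0 := by
    simp only [p, mink_sum_left, mink_smul_left, div_mul_cancel₀ _ (hun _), hw]
  have hpp : mink p p
      = ∑ i, ∑ j, w i * w j * (mink (u i) (u j) / (mink (u i) n * mink (u j) n)) := by
    simp only [p, mink_sum_left, mink_sum_right, mink_smul_left, mink_smul_right,
      Finset.mul_sum]
    refine Finset.sum_congr rfl fun i _ ↦ Finset.sum_congr rfl fun j _ ↦ ?_
    rw [mink_comm (u j) (u i)]
    ring
  exact hpp ▸ mink_self_nonpos_of_mink_eq_zero hn hn0 hpn

lemma integral_Ioi_mul_inv_sq_sq_add {D : ℝ} (hD : 0 < D) :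
    ∫ r in Ioi (0 : ℝ), r * ((r ^ 2 + D) ^ 2)⁻¹ = (2 * D)⁻¹ := by
  have hderiv : ∀ r ∈ Ici (0 : ℝ),
      HasDerivAt (fun r ↦ -(2 * (r ^ 2 + D))⁻¹) (r * ((r ^ 2 + D) ^ 2)⁻¹) r := by
    intro r _
    have hne : 2 * (r ^ 2 + D) ≠ 0 := by positivity
    refine ((((hasDerivAt_pow 2 r).add_const D).const_mul 2).inv hne).neg.congr_deriv ?_
    field_simp
    ring
  have htendsto : Tendsto (fun r : ℝ ↦ -(2 * (r ^ 2 + D))⁻¹) atTop (nhds 0) := by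
    have h : Tendsto (fun r : ℝ ↦ 2 * (r ^ 2 + D)) atTop atTop :=
      (tendsto_atTop_add_const_right _ D (tendsto_pow_atTop two_ne_zero)).const_mul_atTop two_pos
    simpa using h.inv_tendsto_atTop.neg
  rw [integral_Ioi_of_hasDerivAt_of_nonneg' hderiv (fun r (hr : 0 < r) ↦ by positivity) htendsto]
  simp

lemma integral_inv_sq_sq_add_sq_add {D : ℝ} (hD : 0 < D) :
    ∫ z : ℝ × ℝ, ((z.1 ^ 2 + z.2 ^ 2 + D) ^ 2)⁻¹ = π / D := by
  rw [← integral_comp_polarCoord_symm]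
  have hpolar : ∀ p ∈ polarCoord.target, p.1 • (((polarCoord.symm p).1 ^ 2
      + (polarCoord.symm p).2 ^ 2 + D) ^ 2)⁻¹ = p.1 * ((p.1 ^ 2 + D) ^ 2)⁻¹ * 1 := by
    intro p _
    simp only [polarCoord_symm_apply, smul_eq_mul, mul_one]
    congr 4
    linear_combination p.1 ^ 2 * Real.sin_sq_add_cos_sq p.2
  rw [setIntegral_congr_fun polarCoord.open_target.measurableSet hpolar, polarCoord_target,
    Measure.volume_eq_prod, ← Measure.prod_restrict,
    integral_prod_mul (fun r ↦ r * ((r ^ 2 + D) ^ 2)⁻¹) (fun _ ↦ (1 : ℝ)),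
    integral_Ioi_mul_inv_sq_sq_add hD]
  simp [Real.pi_pos.le]
  field_simp
  norm_num

lemma integral_inv_sq_mink_nullVec {u : Fin 4 → ℝ} (hu : 0 < mink u u) (hu0 : 0 < u 0) :
    ∫ z, (mink u (nullVec z) ^ 2)⁻¹ = π / mink u u := by
  have hsquare := mul_mink_nullVec u
  set a := u 0 + u 3
  have ha : 0 < a := add_pos_of_mink_self_pos hu hu0
  set g : ℝ × ℝ → ℝ := fun w ↦ ((w.1 ^ 2 + w.2 ^ 2 + mink u u) ^ 2)⁻¹
  have hg : ∀ z, (mink u (nullVec z) ^ 2)⁻¹ = a ^ 2 * g (a • (z - a⁻¹ • (u 1, u 2))) := by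
    intro z
    have hz : a • (z - a⁻¹ • (u 1, u 2)) = (a * z.1 - u 1, a * z.2 - u 2) := by
      ext <;> simp [mul_sub, ha.ne']
    simp only [hz, g, ← hsquare]
    field_simp
  simp_rw [hg]
  rw [integral_const_mul, integral_sub_right_eq_self (fun z ↦ g (a • z)),
    Measure.integral_comp_smul, integral_inv_sq_sq_add_sq_add hu]
  simp [Module.finrank_prod, abs_of_pos ha]
  field_simp

lemma integrable_inv_sq_mink_nullVec {u : Fin 4 → ℝ} (hu : 0 < mink u u) (hu0 : 0 < u 0) :
    Integrable fun z ↦ (mink u (nullVec z) ^ 2)⁻¹ :=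
  .of_integral_ne_zero <| by rw [integral_inv_sq_mink_nullVec hu hu0]; positivity

lemma integral_inv_sq_lineMap {P Q : ℝ} (hP : 0 < P) (hQ : 0 < Q) :
    ∫ t in (0 : ℝ)..1, (((1 - t) * P + t * Q) ^ 2)⁻¹ = (P * Q)⁻¹ := by
  have hpos : ∀ t ∈ uIcc (0 : ℝ) 1, 0 < (1 - t) * P + t * Q := by
    intro t ht
    rw [uIcc_of_le zero_le_one] at ht
    rcases eq_or_lt_of_le ht.1 with rfl | ht₀
    · simpa using hP
    · nlinarith [mul_nonneg (sub_nonneg.2 ht.2) hP.le]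
  have hderiv : ∀ t ∈ uIcc (0 : ℝ) 1,
      HasDerivAt (fun t ↦ t * (P * ((1 - t) * P + t * Q))⁻¹) (((1 - t) * P + t * Q) ^ 2)⁻¹ t := by
    intro t ht
    have hne : P * ((1 - t) * P + t * Q) ≠ 0 := (mul_pos hP (hpos t ht)).ne'
    have hlin : HasDerivAt (fun t ↦ P * ((1 - t) * P + t * Q)) (P * (Q - P)) t :=
      ((((hasDerivAt_id t).const_sub 1).mul_const P).add
        ((hasDerivAt_id t).mul_const Q)).const_mul P |>.congr_deriv (by ring)
    refine ((hasDerivAt_id t).mul (hlin.inv hne)).congr_deriv ?_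
    have := (hpos t ht).ne'
    simp only [Pi.inv_apply, id]
    field_simp
    ring
  have hcont : ContinuousOn (fun t ↦ (((1 - t) * P + t * Q) ^ 2)⁻¹) (uIcc 0 1) :=
    (by fun_prop : Continuous fun t ↦ ((1 - t) * P + t * Q) ^ 2).continuousOn.inv₀
      fun t ht ↦ (pow_pos (hpos t ht) 2).ne'
  rw [intervalIntegral.integral_eq_sub_of_hasDerivAt hderiv hcont.intervalIntegrable]
  simp

lemma inv_sq_lineMap_le {P Q t : ℝ} (hP : 0 < P) (hQ : 0 < Q) (ht : t ∈ Icc (0 : ℝ) 1) :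
    (((1 - t) * P + t * Q) ^ 2)⁻¹ ≤ (P ^ 2)⁻¹ + (Q ^ 2)⁻¹ := by
  obtain ⟨ht₀, ht₁⟩ := ht
  rcases le_total P Q with h | h
  · have : P ≤ (1 - t) * P + t * Q := by nlinarith
    have := inv_anti₀ (by positivity) (pow_le_pow_left₀ hP.le this 2)
    linarith [inv_nonneg.2 (sq_nonneg Q)]
  · have : Q ≤ (1 - t) * P + t * Q := by nlinarith
    have := inv_anti₀ (by positivity) (pow_le_pow_left₀ hQ.le this 2)
    linarith [inv_nonneg.2 (sq_nonneg P)]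

lemma arcosh_eq_real_arcosh (x : ℝ) : arcosh x = Real.arcosh x := rfl

lemma lcoth_arcosh_of_one_lt {c : ℝ} (hc : 1 < c) :
    lcoth (arcosh c) = c * Real.arcosh c / √(c ^ 2 - 1) := by
  rw [lcoth, arcosh_eq_real_arcosh, if_neg (Real.arcosh_pos hc).ne',
    Real.cosh_arcosh hc.le, Real.sinh_arcosh hc.le]
  ring

lemma quadratic_pos_of_one_le {c t : ℝ} (hc : 1 ≤ c) (ht : t ∈ Icc (0 : ℝ) 1) :
    0 < (1 - t) ^ 2 + t ^ 2 + 2 * t * (1 - t) * c := by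
  have : 0 ≤ 2 * t * (1 - t) * c := by
    have := ht.1; have := ht.2; positivity
  nlinarith [sq_nonneg (1 - 2 * t)]

lemma integral_inv_quadratic_of_one_lt {c : ℝ} (hc : 1 < c) :
    ∫ t in (0 : ℝ)..1, ((1 - t) ^ 2 + t ^ 2 + 2 * t * (1 - t) * c)⁻¹
      = Real.arcosh c / √(c ^ 2 - 1) := by
  set s := √(c ^ 2 - 1)
  have hs2 : s ^ 2 = c ^ 2 - 1 := Real.sq_sqrt (by nlinarith)
  have hs : 0 < s := Real.sqrt_pos.2 (by nlinarith)
  have hcs : c - 1 < s := by nlinarith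
  -- the quadratic is `(s + (c - 1) x) (s - (c - 1) x) / (2 (c - 1))` with `x = 2 t - 1`
  have hderiv : ∀ t ∈ uIcc (0 : ℝ) 1,
      HasDerivAt (fun t ↦ (2 * s)⁻¹ * (Real.log (s + (c - 1) * (2 * t - 1))
        - Real.log (s - (c - 1) * (2 * t - 1))))
        ((1 - t) ^ 2 + t ^ 2 + 2 * t * (1 - t) * c)⁻¹ t := by
    intro t ht
    rw [uIcc_of_le zero_le_one] at ht
    have hX : 0 < s + (c - 1) * (2 * t - 1) := by nlinarith [ht.1, ht.2]
    have hY : 0 < s - (c - 1) * (2 * t - 1) := by nlinarith [ht.1, ht.2]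
    have hlin : HasDerivAt (fun t ↦ (c - 1) * (2 * t - 1)) ((c - 1) * 2) t :=
      (((hasDerivAt_id t).const_mul 2).sub_const 1).const_mul (c - 1) |>.congr_deriv (by ring)
    refine (((hlin.const_add s).log hX.ne').sub ((hlin.const_sub s).log hY.ne')).const_mul
      (2 * s)⁻¹ |>.congr_deriv ?_
    have : c - 1 ≠ 0 := by linarith
    rw [show (1 - t) ^ 2 + t ^ 2 + 2 * t * (1 - t) * c
        = (s + (c - 1) * (2 * t - 1)) * (s - (c - 1) * (2 * t - 1)) / (2 * (c - 1)) by
      field_simp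
      linear_combination -hs2]
    field_simp
    ring
  have hcont : ContinuousOn (fun t ↦ ((1 - t) ^ 2 + t ^ 2 + 2 * t * (1 - t) * c)⁻¹) (uIcc 0 1) :=
    (by fun_prop : Continuous fun t ↦ (1 - t) ^ 2 + t ^ 2 + 2 * t * (1 - t) * c).continuousOn.inv₀
      fun t ht ↦ (quadratic_pos_of_one_le hc.le (by rwa [uIcc_of_le zero_le_one] at ht)).ne'
  rw [intervalIntegral.integral_eq_sub_of_hasDerivAt hderiv hcont.intervalIntegrable]
  have hlog : Real.log (s + (c - 1)) = Real.arcosh c + Real.log (s - (c - 1)) := by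
    rw [show s + (c - 1) = (c + s) * (s - (c - 1)) by linear_combination -hs2,
      Real.log_mul (by positivity) (by linarith), Real.arcosh]
  rw [show (2 : ℝ) * 1 - 1 = 1 by norm_num, show (2 : ℝ) * 0 - 1 = -1 by norm_num, mul_one,
    mul_neg_one, sub_neg_eq_add, ← sub_eq_add_neg, hlog]
  field_simp
  ring

lemma lcoth_arcosh_eq_mul_integral {c : ℝ} (hc : 1 ≤ c) :
    lcoth (arcosh c) = c * ∫ t in (0 : ℝ)..1, ((1 - t) ^ 2 + t ^ 2 + 2 * t * (1 - t) * c)⁻¹ := by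
  rcases hc.eq_or_lt with rfl | hc
  · have : ∀ t : ℝ, (1 - t) ^ 2 + t ^ 2 + 2 * t * (1 - t) = 1 := fun t ↦ by ring
    simp [this, lcoth, arcosh_eq_real_arcosh]
  · rw [integral_inv_quadratic_of_one_lt hc, lcoth_arcosh_of_one_lt hc, mul_div_assoc]

lemma mink_lineMap_self (u v : Fin 4 → ℝ) (t : ℝ) :
    mink ((1 - t) • u + t • v) ((1 - t) • u + t • v)
      = (1 - t) ^ 2 * mink u u + t ^ 2 * mink v v + 2 * t * (1 - t) * mink u v := by
  simp only [mink, Pi.add_apply, Pi.smul_apply, smul_eq_mul]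
  ring

lemma mink_lineMap_self_pos {u v : Fin 4 → ℝ} (hu : 0 < mink u u) (hv : 0 < mink v v)
    (hu0 : 0 < u 0) (hv0 : 0 < v 0) {t : ℝ} (ht : t ∈ Icc (0 : ℝ) 1) :
    0 < mink ((1 - t) • u + t • v) ((1 - t) • u + t • v) := by
  obtain ⟨ht₀, ht₁⟩ := ht
  have huv := mink_pos_of_mink_self_pos hu hv hu0 hv0
  rw [mink_lineMap_self]
  rcases ht₀.eq_or_lt with rfl | ht₀
  · simpa using hu
  · have : 0 ≤ 2 * t * (1 - t) * mink u v := by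
      have := sub_nonneg.2 ht₁; positivity
    nlinarith [mul_pos (pow_pos ht₀ 2) hv, mul_nonneg (sq_nonneg (1 - t)) hu.le]

lemma lineMap_zero_pos {u v : Fin 4 → ℝ} (hu0 : 0 < u 0) (hv0 : 0 < v 0) {t : ℝ}
    (ht : t ∈ Icc (0 : ℝ) 1) : 0 < ((1 - t) • u + t • v) 0 := by
  obtain ⟨ht₀, ht₁⟩ := ht
  simp only [Pi.add_apply, Pi.smul_apply, smul_eq_mul]
  rcases ht₀.eq_or_lt with rfl | ht₀
  · simpa using hu0
  · nlinarith [mul_nonneg (sub_nonneg.2 ht₁) hu0.le]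

lemma integrable_inv_sq_lineMap_mink_nullVec {u v : Fin 4 → ℝ} (hu : 0 < mink u u)
    (hv : 0 < mink v v) (hu0 : 0 < u 0) (hv0 : 0 < v 0) :
    Integrable (fun p : (ℝ × ℝ) × ℝ ↦
        (((1 - p.2) * mink u (nullVec p.1) + p.2 * mink v (nullVec p.1)) ^ 2)⁻¹)
      ((volume : Measure (ℝ × ℝ)).prod (volume.restrict (Ioc 0 1))) := by
  refine Integrable.mono' (((integrable_inv_sq_mink_nullVec hu hu0).add
    (integrable_inv_sq_mink_nullVec hv hv0)).comp_fst _) ?_ ?_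
  · exact (by fun_prop : Continuous fun p : (ℝ × ℝ) × ℝ ↦
      ((1 - p.2) * mink u (nullVec p.1) + p.2 * mink v (nullVec p.1)) ^ 2)
      |>.measurable.inv.aestronglyMeasurable
  · filter_upwards [Measure.quasiMeasurePreserving_snd.ae (ae_restrict_mem measurableSet_Ioc)]
      with p hp
    rw [Real.norm_of_nonneg (by positivity)]
    exact inv_sq_lineMap_le (mink_nullVec_pos hu hu0 p.1) (mink_nullVec_pos hv hv0 p.1)
      (Ioc_subset_Icc_self hp)

lemma inv_mul_eq_integral_lineMap {P Q : ℝ} (hP : 0 < P) (hQ : 0 < Q) :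
    (P * Q)⁻¹ = ∫ t in Ioc (0 : ℝ) 1, (((1 - t) * P + t * Q) ^ 2)⁻¹ := by
  rw [← intervalIntegral.integral_of_le zero_le_one, integral_inv_sq_lineMap hP hQ]

lemma integrable_inv_mul_mink_nullVec {u v : Fin 4 → ℝ} (hu : 0 < mink u u)
    (hv : 0 < mink v v) (hu0 : 0 < u 0) (hv0 : 0 < v 0) :
    Integrable fun z ↦ (mink u (nullVec z) * mink v (nullVec z))⁻¹ := by
  refine (integrable_inv_sq_lineMap_mink_nullVec hu hv hu0 hv0).integral_prod_left.congr ?_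
  exact .of_forall fun z ↦
    (inv_mul_eq_integral_lineMap (mink_nullVec_pos hu hu0 z) (mink_nullVec_pos hv hv0 z)).symm

lemma integral_inv_mul_mink_nullVec {u v : Fin 4 → ℝ} (hu : 0 < mink u u)
    (hv : 0 < mink v v) (hu0 : 0 < u 0) (hv0 : 0 < v 0) :
    ∫ z, (mink u (nullVec z) * mink v (nullVec z))⁻¹
      = π * ∫ t in (0 : ℝ)..1, (mink ((1 - t) • u + t • v) ((1 - t) • u + t • v))⁻¹ := by
  have hinner : ∀ t ∈ Ioc (0 : ℝ) 1,
      ∫ z, (((1 - t) * mink u (nullVec z) + t * mink v (nullVec z)) ^ 2)⁻¹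
        = π * (mink ((1 - t) • u + t • v) ((1 - t) • u + t • v))⁻¹ := by
    intro t ht
    simp only [← mink_smul_left, ← mink_add_left]
    have ht' := Ioc_subset_Icc_self ht
    rw [integral_inv_sq_mink_nullVec (mink_lineMap_self_pos hu hv hu0 hv0 ht')
      (lineMap_zero_pos hu0 hv0 ht'), div_eq_mul_inv]
  calc ∫ z, (mink u (nullVec z) * mink v (nullVec z))⁻¹
      = ∫ z, ∫ t in Ioc (0 : ℝ) 1,
          (((1 - t) * mink u (nullVec z) + t * mink v (nullVec z)) ^ 2)⁻¹ := by
        simp only [← inv_mul_eq_integral_lineMap (mink_nullVec_pos hu hu0 _)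
          (mink_nullVec_pos hv hv0 _)]
    _ = ∫ t in Ioc (0 : ℝ) 1, ∫ z,
          (((1 - t) * mink u (nullVec z) + t * mink v (nullVec z)) ^ 2)⁻¹ :=
        integral_integral_swap (integrable_inv_sq_lineMap_mink_nullVec hu hv hu0 hv0)
    _ = ∫ t in Ioc (0 : ℝ) 1, π * (mink ((1 - t) • u + t • v) ((1 - t) • u + t • v))⁻¹ :=
        setIntegral_congr_fun measurableSet_Ioc hinner
    _ = _ := by
        rw [intervalIntegral.integral_of_le zero_le_one, integral_const_mul]

lemma integral_mink_div_mul_mink_nullVec {u v : Fin 4 → ℝ} (hu : mink u u = 1)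
    (hv : mink v v = 1) (hu0 : 0 < u 0) (hv0 : 0 < v 0) :
    ∫ z, mink u v / (mink u (nullVec z) * mink v (nullVec z)) = π * lcoth (arcosh (mink u v)) := by
  simp only [div_eq_mul_inv, integral_const_mul]
  rw [integral_inv_mul_mink_nullVec (by simp [hu]) (by simp [hv]) hu0 hv0,
    lcoth_arcosh_eq_mul_integral (one_le_mink hu hv hu0 hv0)]
  simp only [mink_lineMap_self, hu, hv, mul_one]
  ring

lemma sum_mul_lcoth_arcosh_nonpos {ι : Type*} [Fintype ι] (u : ι → Fin 4 → ℝ) (w : ι → ℝ)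
    (hu : ∀ i, mink (u i) (u i) = 1) (hu0 : ∀ i, 0 < u i 0) (hw : ∑ i, w i = 0) :
    ∑ i, ∑ j, w i * w j * lcoth (arcosh (mink (u i) (u j))) ≤ 0 := by
  have hint : ∀ i j, Integrable fun z ↦
      w i * w j * (mink (u i) (u j) / (mink (u i) (nullVec z) * mink (u j) (nullVec z))) :=
    fun i j ↦ ((integrable_inv_mul_mink_nullVec (by simp [hu]) (by simp [hu]) (hu0 i)
      (hu0 j)).const_mul (mink (u i) (u j))).const_mul (w i * w j)
      |>.congr (.of_forall fun z ↦ by simp only [div_eq_mul_inv])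
  have hrepr : π * ∑ i, ∑ j, w i * w j * lcoth (arcosh (mink (u i) (u j)))
      = ∫ z, ∑ i, ∑ j,
          w i * w j * (mink (u i) (u j) / (mink (u i) (nullVec z) * mink (u j) (nullVec z))) := by
    rw [integral_finsetSum _ fun i _ ↦ integrable_finsetSum _ fun j _ ↦ hint i j, Finset.mul_sum]
    refine Finset.sum_congr rfl fun i _ ↦ ?_
    rw [integral_finsetSum _ fun j _ ↦ hint i j, Finset.mul_sum]
    refine Finset.sum_congr rfl fun j _ ↦ ?_
    rw [integral_const_mul, integral_mink_div_mul_mink_nullVec (hu i) (hu j) (hu0 i) (hu0 j)]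
    ring
  have hnonpos : π * ∑ i, ∑ j, w i * w j * lcoth (arcosh (mink (u i) (u j))) ≤ 0 :=
    hrepr ▸ integral_nonpos fun z ↦ sum_mul_mink_div_nonpos u w (mink_nullVec_self z)
      (nullVec_zero_pos z).ne' (fun i ↦ (mink_nullVec_pos (by simp [hu]) (hu0 i) z).ne') hw
  exact nonpos_of_mul_nonpos_right hnonpos Real.pi_pos

lemma sum_conj_mul_mul_ofReal {ι : Type*} [Fintype ι] (α : ι → ℂ) (K : ι → ι → ℝ)
    (hK : ∀ i j, K i j = K j i) :
    ∑ i, ∑ j, starRingEnd ℂ (α i) * α j * (K i j : ℂ)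
      = ((∑ i, ∑ j, (α i).re * (α j).re * K i j
          + ∑ i, ∑ j, (α i).im * (α j).im * K i j : ℝ) : ℂ) := by
  apply Complex.ext
  · simp only [Complex.re_sum, Complex.mul_re, Complex.conj_re, Complex.conj_im,
      Complex.ofReal_re, Complex.ofReal_im, Complex.mul_im, ← Finset.sum_add_distrib]
    refine Finset.sum_congr rfl fun i _ ↦ Finset.sum_congr rfl fun j _ ↦ ?_
    ring
  · simp only [Complex.im_sum, Complex.mul_re, Complex.conj_re, Complex.conj_im,
      Complex.ofReal_re, Complex.ofReal_im, Complex.mul_im]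
    -- the imaginary part is antisymmetric in `i, j`
    refine eq_zero_of_neg_eq ?_
    rw [← Finset.sum_neg_distrib, Finset.sum_comm]
    refine Finset.sum_congr rfl fun i _ ↦ ?_
    rw [← Finset.sum_neg_distrib]
    refine Finset.sum_congr rfl fun j _ ↦ ?_
    rw [hK]
    ring

/-- For future-pointing unit timelike vectors `u₁,…,u_N` and complex numbers
`α₁,…,α_N` with `Σᵢ αᵢ = 0`, we have `Σᵢⱼ conj(αᵢ) αⱼ λᵢⱼ coth λᵢⱼ ≤ 0`,
where `cosh λᵢⱼ = uᵢ·uⱼ` and `λ coth λ := 1` at `λ = 0`. -/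
theorem sum_lcoth_nonpos
    {N : ℕ} (u : Fin N → (Fin 4 → ℝ)) (α : Fin N → ℂ)
    (hu : ∀ i, mink (u i) (u i) = 1) (hu0 : ∀ i, 0 < u i 0)
    (hα : ∑ i, α i = 0) :
    ∑ i, ∑ j, (starRingEnd ℂ) (α i) * α j *
        (lcoth (arcosh (mink (u i) (u j))) : ℂ) ≤ 0 := by
  rw [sum_conj_mul_mul_ofReal α _ fun i j ↦ by rw [mink_comm], ← Complex.ofReal_zero,
    Complex.real_le_real]
  have hre : ∑ i, (α i).re = 0 := by rw [← Complex.re_sum, hα, Complex.zero_re]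
  have him : ∑ i, (α i).im = 0 := by rw [← Complex.im_sum, hα, Complex.zero_im]
  exact add_nonpos (sum_mul_lcoth_arcosh_nonpos u _ hu hu0 hre)
    (sum_mul_lcoth_arcosh_nonpos u _ hu hu0 him)
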